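/- arXiv:math/0404484 — 3 statements merged into one kernel-verified Lean document; each statement's English description precedes it below -/
import Mathlib

section
/- Let O be a complete discrete valuation ring of mixed characteristic (0,p), with uniformizer π and residue field k, let a, c ∈ O with c a unit, let u ∈ Zp be a unit, and n ≥ 0 an integer. Then the power series E(T) = 1 − a(1+T)^{u pⁿ} + c(1+T)^{2u pⁿ} ∈ O[[T]] has unit content: some coefficient of E is a unit of O. -/
/-- The `p`-adic binomial coefficient `(x choose m)` for `x ∈ ℤ_p`, defined via the usual
formula `x(x-1)⋯(x-m+1)/m!` computed in `ℚ_p` (it lies in `ℤ_p` by continuity). -/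
noncomputable def PadicInt.choose {p : ℕ} [Fact p.Prime] (x : ℤ_[p]) (m : ℕ) : ℤ_[p] :=
  if h : ‖(∏ i ∈ Finset.range m, ((x : ℚ_[p]) - (i : ℚ_[p]))) / (m.factorial : ℚ_[p])‖ ≤ 1
  then ⟨_, h⟩ else 0

/-- The `p`-adic binomial power series `(1+T)^x = Σ_m (x choose m) Tᵐ ∈ ℤ_p⟦T⟧`. -/
noncomputable def PadicInt.onePlusTPow {p : ℕ} [Fact p.Prime] (x : ℤ_[p]) :
    PowerSeries ℤ_[p] :=
  PowerSeries.mk fun m => PadicInt.choose x m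

/-!
Reduce modulo the maximal ideal of `O`: it suffices that the image of `E` over the residue
field, where `p = 0`, is nonzero. Lucas' congruence `C(x pⁿ, k pⁿ) ≡ C(x, k) mod p`, carried from
`ℕ` to `ℤ_p` by density and continuity of binomial coefficients, turns the coefficients of `E`
at `pⁿ` and `2pⁿ` into `2cu - au` and `c C(2u, 2) - a C(u, 2)` modulo `π`. If both vanish then
`a ≡ 2c`, and Vandermonde's `C(2u, 2) = 2 C(u, 2) + u²` leaves `c u² ≡ 0`, which is impossible
since `c` and `u` are units.
-/

theorem Ring.choose_add_self_two {R : Type*} [CommRing R] [BinomialRing R] (r : R) :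
    Ring.choose (r + r) 2 = 2 * Ring.choose r 2 + r ^ 2 := by
  rw [Ring.add_choose_eq 2 (Commute.refl r), Finset.Nat.sum_antidiagonal_eq_sum_range_succ_mk]
  simp only [Finset.sum_range_succ, Finset.sum_range_zero]
  rw [Ring.choose_zero_right, Ring.choose_one_right]
  ring

theorem IsLocalRing.natCast_mem_maximalIdeal {R : Type*} [CommRing R] [IsLocalRing R]
    (p : ℕ) [MixedCharZero R p] : (p : R) ∈ maximalIdeal R := by
  obtain ⟨I, hI, _⟩ := MixedCharZero.charP_quotient (R := R) (p := p)
  refine le_maximalIdeal hI (Ideal.Quotient.eq_zero_iff_mem.mp ?_)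
  rw [map_natCast]
  exact CharP.cast_eq_zero _ p

theorem PowerSeries.exists_isUnit_coeff_of_map_residue_ne_zero {R : Type*} [CommRing R]
    [IsLocalRing R] {f : PowerSeries R} (hf : f.map (IsLocalRing.residue R) ≠ 0) :
    ∃ m, IsUnit (coeff m f) := by
  obtain ⟨m, hm⟩ : ∃ m, coeff m (f.map (IsLocalRing.residue R)) ≠ 0 := by
    by_contra! h
    exact hf (PowerSeries.ext fun m => by simpa using h m)
  rw [coeff_map] at hm
  exact ⟨m, (IsLocalRing.residue_ne_zero_iff_isUnit _).mp hm⟩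

namespace PadicInt

variable {p : ℕ} [Fact p.Prime]

theorem coe_ringChoose (x : ℤ_[p]) (m : ℕ) :
    ((Ring.choose x m : ℤ_[p]) : ℚ_[p]) =
      (∏ i ∈ Finset.range m, ((x : ℚ_[p]) - (i : ℚ_[p]))) / (m.factorial : ℚ_[p]) := by
  have := Ring.map_choose (PadicInt.Coe.ringHom (p := p)) x m
  rw [Ring.choose_eq_smul, ← Polynomial.aeval_eq_smeval, ← Polynomial.eval_map_algebraMap,
    descPochhammer_map, descPochhammer_eval_eq_prod_range, smul_eq_mul] at this
  rw [div_eq_inv_mul]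
  exact this

theorem choose_eq_ringChoose (x : ℤ_[p]) (m : ℕ) : PadicInt.choose x m = Ring.choose x m := by
  rw [PadicInt.choose, ← coe_ringChoose]
  exact dif_pos (norm_le_one _)

theorem coeff_onePlusTPow (x : ℤ_[p]) (m : ℕ) :
    PowerSeries.coeff m (onePlusTPow x) = Ring.choose x m := by
  rw [onePlusTPow, PowerSeries.coeff_mk, choose_eq_ringChoose]

theorem dvd_ringChoose_mul_pow_sub (x : ℤ_[p]) (k n : ℕ) :
    (p : ℤ_[p]) ∣ Ring.choose (x * p ^ n) (k * p ^ n) - Ring.choose x k := by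
  have hclosed : IsClosed {x : ℤ_[p] |
      (p : ℤ_[p]) ∣ Ring.choose (x * p ^ n) (k * p ^ n) - Ring.choose x k} := by
    simp_rw [← norm_lt_one_iff_dvd, ← mem_ball_zero_iff]
    exact (IsUltrametricDist.isClosed_ball 0 1).preimage (by fun_prop)
  refine denseRange_natCast.induction_on x hclosed fun j => ?_
  have hlucas := Choose.choose_pow_mul_pow_mul_modEq_choose (p := p) (k := n) (a := j) (b := k)
  obtain ⟨t, ht⟩ := hlucas.symm.dvd
  refine ⟨t, ?_⟩
  rw [← Nat.cast_pow, ← Nat.cast_mul, Ring.choose_natCast, Ring.choose_natCast,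
    mul_comm j, mul_comm k]
  exact_mod_cast congrArg (Int.cast : ℤ → ℤ_[p]) ht

theorem map_ringChoose_mul_pow {R : Type*} [Ring R] (ψ : ℤ_[p] →+* R) (hψ : ψ p = 0)
    (x : ℤ_[p]) (k n : ℕ) :
    ψ (Ring.choose (x * p ^ n) (k * p ^ n)) = ψ (Ring.choose x k) := by
  obtain ⟨t, ht⟩ := dvd_ringChoose_mul_pow_sub x k n
  rw [← sub_eq_zero, ← map_sub, ht, map_mul, hψ, zero_mul]

open PowerSeries in
noncomputable def eulerFactor {R : Type*} [CommRing R] (φ : ℤ_[p] →+* R) (a c : R)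
    (x : ℤ_[p]) : PowerSeries R :=
  1 - C a * map φ (onePlusTPow x) + C c * map φ (onePlusTPow (2 * x))

theorem map_eulerFactor {R S : Type*} [CommRing R] [CommRing S] (φ : ℤ_[p] →+* R)
    (f : R →+* S) (a c : R) (x : ℤ_[p]) :
    (eulerFactor φ a c x).map f = eulerFactor (f.comp φ) (f a) (f c) x := by
  simp only [eulerFactor, map_add, map_sub, map_mul, map_one, PowerSeries.map_C,
    PowerSeries.map_comp, RingHom.comp_apply]

theorem coeff_eulerFactor {R : Type*} [CommRing R] (φ : ℤ_[p] →+* R) (a c : R) (x : ℤ_[p])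
    {m : ℕ} (hm : m ≠ 0) :
    PowerSeries.coeff m (eulerFactor φ a c x) =
      c * φ (Ring.choose (2 * x) m) - a * φ (Ring.choose x m) := by
  simp only [eulerFactor, map_add, map_sub, PowerSeries.coeff_one, if_neg hm,
    PowerSeries.coeff_C_mul, PowerSeries.coeff_map, coeff_onePlusTPow]
  ring

theorem eulerFactor_ne_zero {K : Type*} [CommRing K] [IsDomain K] (ψ : ℤ_[p] →+* K)
    (hψ : ψ p = 0) {a c : K} (hc : c ≠ 0) {x : ℤ_[p]} (hx : ψ x ≠ 0) (n : ℕ) :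
    eulerFactor ψ a c (x * p ^ n) ≠ 0 := by
  intro h
  have hcoeff (k : ℕ) (hk : k ≠ 0) :
      c * ψ (Ring.choose (2 * x) k) - a * ψ (Ring.choose x k) = 0 := by
    have hkp : k * p ^ n ≠ 0 := mul_ne_zero hk (pow_ne_zero n (Fact.out : p.Prime).ne_zero)
    rw [← map_ringChoose_mul_pow ψ hψ (2 * x) k n, ← map_ringChoose_mul_pow ψ hψ x k n,
      mul_assoc, ← coeff_eulerFactor ψ a c _ hkp, h, map_zero]
  have h1 := hcoeff 1 one_ne_zero
  have h2 := hcoeff 2 two_ne_zero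
  rw [Ring.choose_one_right, Ring.choose_one_right] at h1
  rw [two_mul x, Ring.choose_add_self_two] at h2
  simp only [map_add, map_mul, map_pow, map_ofNat] at h1 h2
  have ha : a = 2 * c := by
    refine mul_right_cancel₀ hx ?_
    linear_combination -h1
  have hsq : c * ψ x ^ 2 = 0 := by linear_combination h2 + ψ (Ring.choose x 2) * ha
  exact mul_ne_zero hc (pow_ne_zero 2 hx) hsq

end PadicInt

theorem euler_factor_unit_content_general {p : ℕ} [Fact p.Prime]
    {O : Type*} [CommRing O] [IsDomain O] [IsDiscreteValuationRing O]
    [MixedCharZero O p]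
    [Algebra ℤ_[p] O]
    (a c : O) (hc : IsUnit c) (u : ℤ_[p]ˣ) (n : ℕ) :
    ∃ m, IsUnit (PowerSeries.coeff (R := O) m
      (1 - PowerSeries.C (R := O) a *
          PowerSeries.map (algebraMap ℤ_[p] O)
            (PadicInt.onePlusTPow ((u : ℤ_[p]) * (p : ℤ_[p]) ^ n))
        + PowerSeries.C (R := O) c *
          PowerSeries.map (algebraMap ℤ_[p] O)
            (PadicInt.onePlusTPow (2 * (u : ℤ_[p]) * (p : ℤ_[p]) ^ n)))) := by
  rw [mul_assoc 2]
  refine PowerSeries.exists_isUnit_coeff_of_map_residue_ne_zero ?_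
  rw [← PadicInt.eulerFactor, PadicInt.map_eulerFactor]
  refine PadicInt.eulerFactor_ne_zero _ ?_ ((IsLocalRing.residue_ne_zero_iff_isUnit c).mpr hc) ?_ n
  · rw [RingHom.comp_apply, map_natCast, IsLocalRing.residue_eq_zero_iff]
    exact IsLocalRing.natCast_mem_maximalIdeal p
  · exact (IsLocalRing.residue_ne_zero_iff_isUnit _).mpr (u.isUnit.map _)

/-- Let `O` be a complete discrete valuation ring of mixed characteristic `(0, p)`,
`a, c ∈ O` with `c` a unit, `u ∈ ℤ_pˣ` and `n ≥ 0`.  Then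
`E(T) = 1 − a(1+T)^{u pⁿ} + c(1+T)^{2 u pⁿ}` has unit content: some coefficient of `E`
is a unit of `O`. -/
theorem euler_factor_unit_content {p : ℕ} [Fact p.Prime]
    {O : Type*} [CommRing O] [IsDomain O] [IsDiscreteValuationRing O]
    [IsAdicComplete (IsLocalRing.maximalIdeal O) O] [MixedCharZero O p]
    [Algebra ℤ_[p] O]
    (a c : O) (hc : IsUnit c) (u : ℤ_[p]ˣ) (n : ℕ) :
    ∃ m, IsUnit (PowerSeries.coeff (R := O) m
      (1 - PowerSeries.C (R := O) a *
          PowerSeries.map (algebraMap ℤ_[p] O)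
            (PadicInt.onePlusTPow ((u : ℤ_[p]) * (p : ℤ_[p]) ^ n))
        + PowerSeries.C (R := O) c *
          PowerSeries.map (algebraMap ℤ_[p] O)
            (PadicInt.onePlusTPow (2 * (u : ℤ_[p]) * (p : ℤ_[p]) ^ n)))) :=
  euler_factor_unit_content_general a c hc u n
end

section
/- Let Λ = Zp[[Γ]] with Γ = 1 + pZp (p an odd prime), and let A be a complete local domain, finite and flat as a Λ-module. Suppose x ∈ A lies in ℘'A for every classical height one prime ℘' of Λ (i.e. for every kernel of the Zp-algebra map Λ → O sending a topological generator γ to ζγᵏ with ζ a p-power root of unity and k ≥ 2 an integer). Then x = 0. -/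
/-- A prime `P` of `Λ = ℤ_p⟦T⟧` is *classical* if it is the kernel of a `ℤ_p`-algebra
map `Λ → O`, where `O` is a domain, free of finite rank over `ℤ_p`, sending the
topological generator `γ = 1 + p` of `Γ = 1 + pℤ_p` (identified with `1 + T`) to
`ζ·γᵏ` with `ζ` a `p`-power root of unity and `k ≥ 2` an integer. -/
def IsClassicalPrime (p : ℕ) [Fact p.Prime] (P : Ideal (PowerSeries ℤ_[p])) : Prop :=
  ∃ (O : Type) (_ : CommRing O) (_ : IsDomain O) (_ : Algebra ℤ_[p] O)
    (_ : Module.Finite ℤ_[p] O) (φ : PowerSeries ℤ_[p] →ₐ[ℤ_[p]] O)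
    (ζ : O) (m k : ℕ), 2 ≤ k ∧ ζ ^ p ^ m = 1 ∧
      φ (1 + PowerSeries.X) = ζ * algebraMap ℤ_[p] O ((1 + (p : ℤ_[p])) ^ k) ∧
      P = RingHom.ker (φ : PowerSeries ℤ_[p] →+* O)

/-!
For `k ≥ 2` the point `aₖ = (1 + p)ᵏ - 1` lies in `pℤ_p`, so evaluation at `aₖ` is defined on
`Λ = ℤ_p⟦X⟧` (by Weierstrass division) and its kernel `(X - aₖ)` is a classical prime; hence each
`X - aₖ` divides `x` in `A`. The `X - aₖ` are pairwise non-associate primes of `Λ`, and over a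
flat algebra divisibility by such elements combines, so `x` is divisible by a product of `n` of
them, which lies in `𝔪_Λⁿ`. As `A` is integral over `Λ`, `𝔪_Λ` maps into `𝔪_A`, so
`x ∈ ⋂ₙ 𝔪_Aⁿ = 0`.
-/

open PowerSeries IsLocalRing Pointwise

section Flat

variable {R : Type*} [CommRing R]

theorem Prime.isSMulRegular_quotSMulTop {a b : R} (hb : Prime b) (hab : ¬ b ∣ a) :
    IsSMulRegular (QuotSMulTop b R) a := by
  refine (isSMulRegular_quotient_iff_mem_of_smul_mem _ a).mpr fun u hu => ?_
  obtain ⟨v, -, hv⟩ := Submodule.mem_smul_pointwise_iff_exists _ _ _ |>.mp hu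
  obtain h | h := hb.dvd_or_dvd ⟨v, hv.symm⟩
  · exact absurd h hab
  · obtain ⟨w, rfl⟩ := h
    exact Submodule.smul_mem_pointwise_smul _ _ _ Submodule.mem_top

theorem Module.Flat.isSMulRegular_quotSMulTop {M : Type*} [AddCommGroup M] [Module R M]
    [Module.Flat R M] {a b : R} (h : IsSMulRegular (QuotSMulTop b R) a) :
    IsSMulRegular (QuotSMulTop b M) a :=
  (LinearEquiv.isSMulRegular_congr
    (QuotSMulTop.tensorQuotSMulTopEquivQuotSMulTop b M R ≪≫ₗ
      QuotSMulTop.congr b (TensorProduct.rid R M)) a).mp (h.lTensor M)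

variable {S : Type*} [CommRing S] [Algebra R S] [Module.Flat R S]

theorem Module.Flat.algebraMap_mul_dvd {a b : R} (h : IsSMulRegular (QuotSMulTop b R) a)
    {x : S} (ha : algebraMap R S a ∣ x) (hb : algebraMap R S b ∣ x) :
    algebraMap R S (a * b) ∣ x := by
  obtain ⟨y, rfl⟩ := ha
  obtain ⟨z, hz⟩ := hb
  have hy : y ∈ b • (⊤ : Submodule R S) := by
    refine mem_of_isSMulRegular_quotient_of_smul_mem (isSMulRegular_quotSMulTop h) ?_
    rw [Algebra.smul_def, hz, ← Algebra.smul_def]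
    exact Submodule.smul_mem_pointwise_smul _ _ _ Submodule.mem_top
  obtain ⟨t, -, rfl⟩ := Submodule.mem_smul_pointwise_iff_exists _ _ _ |>.mp hy
  exact ⟨t, by rw [Algebra.smul_def, map_mul, mul_assoc]⟩

theorem Module.Flat.algebraMap_prod_dvd {ι : Type*} (s : Finset ι) {f : ι → R}
    (hprime : ∀ i ∈ s, Prime (f i)) (hdvd : ∀ i ∈ s, ∀ j ∈ s, f i ∣ f j → i = j) {x : S}
    (hx : ∀ i ∈ s, algebraMap R S (f i) ∣ x) : algebraMap R S (∏ i ∈ s, f i) ∣ x := by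
  induction s using Finset.cons_induction with
  | empty => simp
  | cons j s hj ih =>
    simp only [Finset.mem_cons, forall_eq_or_imp] at hprime hdvd hx
    have hj_ndvd : ¬ f j ∣ ∏ i ∈ s, f i := fun h => by
      obtain ⟨i, hi, hji⟩ := (hprime.1.dvd_finsetProd_iff _).mp h
      exact hj (hdvd.1.2 i hi hji ▸ hi)
    rw [Finset.prod_cons, mul_comm]
    exact algebraMap_mul_dvd (hprime.1.isSMulRegular_quotSMulTop hj_ndvd)
      (ih hprime.2 (fun i hi k hk => (hdvd.2 i hi).2 k hk) hx.2) hx.1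

end Flat

theorem IsHausdorff.eq_zero_of_forall_mem_pow {R : Type*} [CommRing R] {I : Ideal R}
    [IsHausdorff I R] {x : R} (h : ∀ n, x ∈ I ^ n) : x = 0 :=
  IsHausdorff.haus ‹_› x fun n => by simpa [SModEq.zero] using h n

theorem Ideal.prod_mem_pow_card {R ι : Type*} [CommRing R] {I : Ideal R} {s : Finset ι}
    {f : ι → R} (h : ∀ i ∈ s, f i ∈ I) : ∏ i ∈ s, f i ∈ I ^ s.card := by
  simpa using Ideal.prod_mem_prod (I := fun _ => I) h

theorem IsLocalRing.map_maximalIdeal_le_of_isIntegral {R S : Type*} [CommRing R] [CommRing S]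
    [IsLocalRing R] [IsLocalRing S] [Algebra R S] [Algebra.IsIntegral R S] :
    (maximalIdeal R).map (algebraMap R S) ≤ maximalIdeal S :=
  Ideal.map_le_iff_le_comap.mpr
    (eq_maximalIdeal (Ideal.isMaximal_comap_of_isIntegral_of_isMaximal (maximalIdeal S))).ge

theorem Polynomial.isDistinguishedAt_X_sub_C {R : Type*} [CommRing R] {I : Ideal R} {a : R}
    (ha : a ∈ I) : (X - C a).IsDistinguishedAt I := by
  refine ⟨⟨fun {n} hn => ?_⟩, monic_X_sub_C a⟩
  obtain rfl : n = 0 := by linarith [natDegree_X_sub_C_le a (R := R)]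
  simpa using I.neg_mem ha

namespace PowerSeries

variable {R : Type*} [CommRing R] [IsLocalRing R] {a : R}

theorem X_sub_C_mem_maximalIdeal (ha : a ∈ maximalIdeal R) : X - C a ∈ maximalIdeal R⟦X⟧ := by
  rw [mem_maximalIdeal, mem_nonunits_iff, isUnit_iff_constantCoeff]
  simpa using ha

variable [IsAdicComplete (maximalIdeal R) R]

/-- `R⟦X⟧ ⧸ (X - a) ≃ R[X] ⧸ (X - a) ≃ R`, the first step being Weierstrass division. -/
noncomputable def quotientSpanXSubCAlgEquiv (ha : a ∈ maximalIdeal R) :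
    (R⟦X⟧ ⧸ Ideal.span {X - C a}) ≃ₐ[R] R :=
  (Ideal.quotientEquivAlgOfEq R (by simp)).trans <|
    (Polynomial.isDistinguishedAt_X_sub_C ha).algEquivQuotient.symm.trans
      (Polynomial.quotientSpanXSubCAlgEquiv a)

noncomputable def evalOfMemMaximalIdeal (ha : a ∈ maximalIdeal R) : R⟦X⟧ →ₐ[R] R :=
  (quotientSpanXSubCAlgEquiv ha).toAlgHom.comp (Ideal.Quotient.mkₐ R _)

theorem ker_evalOfMemMaximalIdeal (ha : a ∈ maximalIdeal R) :
    RingHom.ker (evalOfMemMaximalIdeal ha) = Ideal.span {X - C a} := by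
  ext f
  simp [evalOfMemMaximalIdeal, RingHom.mem_ker, Ideal.Quotient.eq_zero_iff_mem]

theorem evalOfMemMaximalIdeal_C (ha : a ∈ maximalIdeal R) (b : R) :
    evalOfMemMaximalIdeal ha (C b) = b :=
  (evalOfMemMaximalIdeal ha).commutes b

theorem evalOfMemMaximalIdeal_X (ha : a ∈ maximalIdeal R) : evalOfMemMaximalIdeal ha X = a := by
  have h : X - C a ∈ RingHom.ker (evalOfMemMaximalIdeal ha) := by
    rw [ker_evalOfMemMaximalIdeal]
    exact Ideal.mem_span_singleton_self _
  rw [RingHom.mem_ker, map_sub, sub_eq_zero] at h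
  rw [h, evalOfMemMaximalIdeal_C]

theorem X_sub_C_dvd_X_sub_C_iff (ha : a ∈ maximalIdeal R) {b : R} :
    X - C a ∣ X - C b ↔ a = b := by
  refine ⟨fun h => ?_, fun h => h ▸ dvd_rfl⟩
  rwa [← Ideal.mem_span_singleton, ← ker_evalOfMemMaximalIdeal ha, RingHom.mem_ker, map_sub,
    evalOfMemMaximalIdeal_X, evalOfMemMaximalIdeal_C, sub_eq_zero] at h

theorem prime_X_sub_C [IsDomain R] (ha : a ∈ maximalIdeal R) : Prime (X - C a : R⟦X⟧) := by
  have : (Ideal.span {X - C a} : Ideal R⟦X⟧).IsPrime := by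
    rw [← ker_evalOfMemMaximalIdeal ha]
    exact RingHom.ker_isPrime _
  refine (Ideal.span_singleton_prime fun h => ?_).mp this
  simpa using congrArg (coeff 1) h

end PowerSeries

namespace PadicInt

variable {p : ℕ} [Fact p.Prime]

theorem one_add_p_pow_sub_one_mem_maximalIdeal (k : ℕ) :
    (1 + (p : ℤ_[p])) ^ k - 1 ∈ maximalIdeal ℤ_[p] := by
  rw [maximalIdeal_eq_span_p, Ideal.mem_span_singleton]
  simpa using sub_dvd_pow_sub_pow (1 + (p : ℤ_[p])) 1 k

theorem one_add_p_pow_injective : Function.Injective fun k : ℕ => (1 + (p : ℤ_[p])) ^ k := by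
  intro k j (h : (1 + (p : ℤ_[p])) ^ k = (1 + (p : ℤ_[p])) ^ j)
  have h' : ((1 + p) ^ k : ℕ) = ((1 + p) ^ j : ℕ) := by exact_mod_cast h
  exact Nat.pow_right_injective (by linarith [(Fact.out : p.Prime).two_le]) h'

theorem isClassicalPrime_span_X_sub_C {k : ℕ} (hk : 2 ≤ k) :
    IsClassicalPrime p (Ideal.span {X - C ((1 + (p : ℤ_[p])) ^ k - 1)}) := by
  have ha := one_add_p_pow_sub_one_mem_maximalIdeal (p := p) k
  refine ⟨ℤ_[p], inferInstance, inferInstance, inferInstance, inferInstance,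
    evalOfMemMaximalIdeal ha, 1, 0, k, hk, by simp, ?_, (ker_evalOfMemMaximalIdeal ha).symm⟩
  simp [evalOfMemMaximalIdeal_X]

end PadicInt

theorem eq_zero_of_mem_all_classical_primes_general {p : ℕ} [Fact p.Prime]
    {A : Type*} [CommRing A] [IsLocalRing A]
    [IsAdicComplete (IsLocalRing.maximalIdeal A) A]
    [Algebra (PowerSeries ℤ_[p]) A] [Module.Finite (PowerSeries ℤ_[p]) A]
    [Module.Flat (PowerSeries ℤ_[p]) A]
    (x : A)
    (hx : ∀ P : Ideal (PowerSeries ℤ_[p]), IsClassicalPrime p P →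
      x ∈ Ideal.map (algebraMap (PowerSeries ℤ_[p]) A) P) :
    x = 0 := by
  set f : ℕ → ℤ_[p]⟦X⟧ := fun k => X - C ((1 + (p : ℤ_[p])) ^ (k + 2) - 1)
  have hmem k := PadicInt.one_add_p_pow_sub_one_mem_maximalIdeal (p := p) (k + 2)
  have hinj i j (hij : f i ∣ f j) : i = j := by
    have := PadicInt.one_add_p_pow_injective <|
      sub_left_injective <| (X_sub_C_dvd_X_sub_C_iff (hmem i)).mp hij
    omega
  have hdvd k : algebraMap _ A (f k) ∣ x := by
    have := hx _ (PadicInt.isClassicalPrime_span_X_sub_C (k := k + 2) (by omega))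
    rwa [Ideal.map_span, Set.image_singleton, Ideal.mem_span_singleton] at this
  refine IsHausdorff.eq_zero_of_forall_mem_pow (I := maximalIdeal A) fun n => ?_
  obtain ⟨y, rfl⟩ := Module.Flat.algebraMap_prod_dvd (Finset.range n)
    (fun k _ => prime_X_sub_C (hmem k)) (fun i _ j _ => hinj i j) fun k _ => hdvd k
  refine Ideal.mul_mem_right _ _ <|
    Ideal.pow_right_mono (map_maximalIdeal_le_of_isIntegral (R := ℤ_[p]⟦X⟧)) n ?_
  have hprod := Ideal.prod_mem_pow_card (s := Finset.range n) fun k _ =>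
    X_sub_C_mem_maximalIdeal (hmem k)
  rw [Finset.card_range] at hprod
  rw [← Ideal.map_pow]
  exact Ideal.mem_map_of_mem _ hprod

/-- Let `p` be odd, `Λ = ℤ_p⟦Γ⟧ ≅ ℤ_p⟦T⟧` and `A` a complete local domain, finite and
flat as a `Λ`-module.  If `x ∈ A` lies in `℘'A` for every classical height one prime
`℘'` of `Λ`, then `x = 0`. -/
theorem eq_zero_of_mem_all_classical_primes {p : ℕ} [Fact p.Prime] (hp : Odd p)
    {A : Type*} [CommRing A] [IsDomain A] [IsLocalRing A]
    [IsAdicComplete (IsLocalRing.maximalIdeal A) A]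
    [Algebra (PowerSeries ℤ_[p]) A] [Module.Finite (PowerSeries ℤ_[p]) A]
    [Module.Flat (PowerSeries ℤ_[p]) A]
    (x : A)
    (hx : ∀ P : Ideal (PowerSeries ℤ_[p]), IsClassicalPrime p P →
      x ∈ Ideal.map (algebraMap (PowerSeries ℤ_[p]) A) P) :
    x = 0 :=
  eq_zero_of_mem_all_classical_primes_general x hx
end

section
/- Let R be a discrete valuation ring with maximal ideal ℘ and fraction field F, let L be a free R-module of rank 2 with an action of a group G, and set V = L ⊗_R F, W = L/℘L. If dim_F (V_G) = dim_{R/℘} (W_G) = d (coinvariants), then the coinvariant module L_G is a free R-module of rank d, and the natural maps L_G ⊗_R F → V_G and L_G/℘L_G → W_G are isomorphisms. -/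
open scoped TensorProduct

/-- The submodule of `L` generated by the elements `g·m − m`; the quotient by it is the
module of `G`-coinvariants `L_G`. -/
def coinvSubmodule (R : Type*) {L G : Type*} [CommRing R] [AddCommGroup L] [Module R L]
    [Group G] (ρ : G →* (L ≃ₗ[R] L)) : Submodule R L :=
  Submodule.span R {x | ∃ (g : G) (m : L), x = ρ g m - m}

/-- The coinvariants submodule of the base change `A₀ ⊗_R L` (for the base-changed
`G`-action). -/
def coinvBaseChange (R A₀ : Type*) {L G : Type*} [CommRing R] [CommRing A₀] [Algebra R A₀]
    [AddCommGroup L] [Module R L] [Group G] (ρ : G →* (L ≃ₗ[R] L)) :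
    Submodule A₀ (A₀ ⊗[R] L) :=
  Submodule.span A₀ {x | ∃ (g : G) (v : A₀ ⊗[R] L),
    x = LinearMap.baseChange A₀ (↑(ρ g) : L →ₗ[R] L) v - v}

/-- The natural base-change map `A₀ ⊗_R (L_G) → (A₀ ⊗_R L)_G`. -/
noncomputable def coinvNaturalBaseChangeMap (R A₀ : Type*) {L G : Type*} [CommRing R]
    [CommRing A₀] [Algebra R A₀] [AddCommGroup L] [Module R L] [Group G]
    (ρ : G →* (L ≃ₗ[R] L)) :
    (A₀ ⊗[R] (L ⧸ coinvSubmodule R ρ)) →ₗ[A₀] ((A₀ ⊗[R] L) ⧸ coinvBaseChange R A₀ ρ) :=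
  LinearMap.liftBaseChange A₀
    (Submodule.liftQ (coinvSubmodule R ρ)
      (((coinvBaseChange R A₀ ρ).mkQ.restrictScalars R).comp ((TensorProduct.mk R A₀ L) 1))
      (by
        rw [coinvSubmodule, Submodule.span_le]
        rintro x ⟨g, m, rfl⟩
        have hmem : ((1 : A₀) ⊗ₜ[R] (ρ g m) - (1 : A₀) ⊗ₜ[R] m) ∈ coinvBaseChange R A₀ ρ :=
          Submodule.subset_span ⟨g, (1 : A₀) ⊗ₜ[R] m, by simp [LinearMap.baseChange_tmul]⟩
        simp only [SetLike.mem_coe, LinearMap.mem_ker, LinearMap.comp_apply,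
          LinearMap.restrictScalars_apply, TensorProduct.mk_apply, TensorProduct.tmul_sub,
          Submodule.mkQ_apply]
        exact (Submodule.Quotient.mk_eq_zero _).2 hmem))


/-!
Base change is right exact, so `A₀ ⊗ L_G ≅ (A₀ ⊗ L)_G` for every `R`-algebra `A₀`. This gives
both bijectivity claims and turns the hypotheses into `dim_F (F ⊗ L_G) = d = dim_k (k ⊗ L_G)`.
The first equality says that `L_G` has rank `d`. By Nakayama, lifts of a `k`-basis of
`k ⊗ L_G` define a surjection `R^d → L_G`; by rank–nullity over the domain `R` its kernel is a
torsion-free module of rank zero, hence zero, so `L_G ≅ R^d`.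
-/

open Module TensorProduct

theorem LinearMap.injective_of_surjective_of_finrank_eq {R F M : Type*} [CommRing R] [IsDomain R]
    [AddCommGroup F] [Module R F] [Module.Finite R F] [IsTorsionFree R F]
    [AddCommGroup M] [Module R M] (f : F →ₗ[R] M) (hf : Function.Surjective f)
    (h : finrank R M = finrank R F) : Function.Injective f := by
  have hker : finrank R (LinearMap.ker f) = 0 := by
    have := (LinearMap.ker f).finrank_quotient_add_finrank
    rw [(f.quotKerEquivOfSurjective hf).finrank_eq, h] at this
    omega
  have hrank : Module.rank R (LinearMap.ker f) = 0 := by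
    rw [← Submodule.finrank_eq_rank, hker, Nat.cast_zero]
  rw [← LinearMap.ker_eq_bot, Submodule.eq_bot_iff]
  intro x hx
  simpa using rank_zero_iff_forall_zero.mp hrank ⟨x, hx⟩

namespace IsLocalRing

variable {R M : Type*} [CommRing R] [IsLocalRing R] [AddCommGroup M] [Module R M]

theorem finrank_quotient_tensorProduct_eq_finrank_residueField (I : Ideal R) [hI : I.IsMaximal] :
    finrank (R ⧸ I) ((R ⧸ I) ⊗[R] M) = finrank (ResidueField R) (ResidueField R ⊗[R] M) := by
  obtain rfl := eq_maximalIdeal hI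
  rfl

theorem free_of_finrank_residueField_tensorProduct_eq [IsDomain R] [Module.Finite R M]
    (h : finrank (ResidueField R) (ResidueField R ⊗[R] M) = finrank R M) : Module.Free R M := by
  let b := Module.finBasisOfFinrankEq _ _ h
  choose f hf using fun i ↦
    TensorProduct.mk_surjective R M (ResidueField R) Ideal.Quotient.mk_surjective (b i)
  have hsurj : Function.Surjective (Fintype.linearCombination R f) := by
    rw [← LinearMap.range_eq_top, Fintype.range_linearCombination]
    exact span_eq_top_of_tmul_eq_basis f b hf
  have hinj := (Fintype.linearCombination R f).injective_of_surjective_of_finrank_eq hsurj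
    (by rw [Module.finrank_fin_fun])
  exact .of_equiv (LinearEquiv.ofBijective _ ⟨hinj, hsurj⟩)

end IsLocalRing

section BaseChange

variable {R A₀ L G : Type*} [CommRing R] [CommRing A₀] [Algebra R A₀]
  [AddCommGroup L] [Module R L] [Group G] (ρ : G →* (L ≃ₗ[R] L))

lemma coinvSubmodule_mkQ_comp (g : G) :
    (coinvSubmodule R ρ).mkQ ∘ₗ (ρ g : L →ₗ[R] L) = (coinvSubmodule R ρ).mkQ := by
  ext m
  exact (Submodule.Quotient.eq _).mpr (Submodule.subset_span ⟨g, m, rfl⟩)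

lemma coinvBaseChange_le_ker_baseChange_mkQ :
    coinvBaseChange R A₀ ρ ≤ LinearMap.ker ((coinvSubmodule R ρ).mkQ.baseChange A₀) := by
  rw [coinvBaseChange, Submodule.span_le]
  rintro _ ⟨g, v, rfl⟩
  rw [SetLike.mem_coe, LinearMap.mem_ker, map_sub, sub_eq_zero, ← LinearMap.comp_apply,
    ← LinearMap.baseChange_comp, coinvSubmodule_mkQ_comp]

lemma coinvNaturalBaseChangeMap_tmul_mk (a : A₀) (m : L) :
    coinvNaturalBaseChangeMap R A₀ ρ (a ⊗ₜ Submodule.Quotient.mk m) =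
      Submodule.Quotient.mk (a ⊗ₜ m) := by
  rw [coinvNaturalBaseChangeMap, LinearMap.liftBaseChange_tmul, Submodule.liftQ_apply,
    LinearMap.comp_apply, TensorProduct.mk_apply, LinearMap.restrictScalars_apply,
    Submodule.mkQ_apply, ← Submodule.Quotient.mk_smul, smul_tmul', smul_eq_mul, mul_one]

noncomputable def coinvBaseChangeEquiv :
    A₀ ⊗[R] (L ⧸ coinvSubmodule R ρ) ≃ₗ[A₀] (A₀ ⊗[R] L) ⧸ coinvBaseChange R A₀ ρ :=
  .ofLinearMap (coinvNaturalBaseChangeMap R A₀ ρ)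
    ((coinvBaseChange R A₀ ρ).liftQ _ (coinvBaseChange_le_ker_baseChange_mkQ ρ))
    (Submodule.linearMap_qext _ <| AlgebraTensorModule.ext fun a m ↦ by
      simp [coinvNaturalBaseChangeMap_tmul_mk])
    (AlgebraTensorModule.ext fun a q ↦ by
      obtain ⟨m, rfl⟩ := Submodule.Quotient.mk_surjective _ q
      simp [coinvNaturalBaseChangeMap_tmul_mk])

end BaseChange

/-- Let `R` be a discrete valuation ring with maximal ideal `℘ = (π)` and fraction field
`F`, `L` a free `R`-module of rank `2` with an action of a group `G`, and set
`V = L ⊗_R F` and `W = L/℘L (= (R/℘) ⊗_R L)`.  If the spaces of coinvariants `V_G` and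
`W_G` both have dimension `d`, then `L_G` is a free `R`-module of rank `d` and the
natural maps `L_G ⊗_R F → V_G` and `L_G/℘L_G → W_G` are isomorphisms. -/
theorem coinv_free_of_generic_and_special_rank {R L G : Type*} [CommRing R] [IsDomain R]
    [IsDiscreteValuationRing R] [AddCommGroup L] [Module R L] [Module.Free R L]
    (hrk : Module.finrank R L = 2) [Group G] (ρ : G →* (L ≃ₗ[R] L))
    (π : R) (hπ : Irreducible π) (d : ℕ)
    (hV : Module.finrank (FractionRing R)
        ((FractionRing R ⊗[R] L) ⧸ coinvBaseChange R (FractionRing R) ρ) = d)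
    (hW : Module.finrank (R ⧸ Ideal.span {π})
        (((R ⧸ Ideal.span {π}) ⊗[R] L) ⧸ coinvBaseChange R (R ⧸ Ideal.span {π}) ρ) = d) :
    Module.Free R (L ⧸ coinvSubmodule R ρ) ∧
    Module.finrank R (L ⧸ coinvSubmodule R ρ) = d ∧
    Function.Bijective (coinvNaturalBaseChangeMap R (FractionRing R) ρ) ∧
    Function.Bijective (coinvNaturalBaseChangeMap R (R ⧸ Ideal.span {π}) ρ) := by
  have : (Ideal.span {π}).IsMaximal :=
    (IsDiscreteValuationRing.irreducible_iff_uniformizer π).mp hπ ▸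
      IsLocalRing.maximalIdeal.isMaximal R
  have : Module.Finite R L := Module.finite_of_finrank_pos (by omega)
  have hgeneric : finrank R (L ⧸ coinvSubmodule R ρ) = d := by
    rw [← (TensorProduct.isBaseChange R _ (FractionRing R)).finrank_eq,
      (coinvBaseChangeEquiv ρ).finrank_eq, hV]
  have hspecial : finrank (IsLocalRing.ResidueField R)
      (IsLocalRing.ResidueField R ⊗[R] (L ⧸ coinvSubmodule R ρ)) = d := by
    rw [← IsLocalRing.finrank_quotient_tensorProduct_eq_finrank_residueField (Ideal.span {π}),
      (coinvBaseChangeEquiv ρ).finrank_eq, hW]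
  exact ⟨IsLocalRing.free_of_finrank_residueField_tensorProduct_eq
      (hspecial.trans hgeneric.symm),
    hgeneric, (coinvBaseChangeEquiv ρ).bijective, (coinvBaseChangeEquiv ρ).bijective⟩
end
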